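/- Let G be an n-vertex Class 2 simple graph with maximum degree Δ having a full-deficiency pair (a,b) such that ab is a critical edge of G. Then for every vertex x ∈ V(G) ∖ {a,b} with d_G(x) ≥ n − |N_G(a) ∪ N_G(b)|, we have d_G(x) ≥ Δ−1; furthermore, if d_G(a) < Δ and d_G(b) < Δ, then d_G(x) = Δ. -/

import Mathlib

/-- `c` is a proper edge coloring of `G` using colors in `{1, …, k}`:
every edge gets a color in `[1,k]`, and distinct edges sharing an endpoint
get distinct colors. -/
def IsEdgeColoring {V : Type*} (G : SimpleGraph V) (k : ℕ) (c : Sym2 V → ℕ) : Prop :=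
  (∀ e ∈ G.edgeSet, 1 ≤ c e ∧ c e ≤ k) ∧
    ∀ e ∈ G.edgeSet, ∀ f ∈ G.edgeSet, e ≠ f → (∃ v, v ∈ e ∧ v ∈ f) → c e ≠ c f

/-- The chromatic index `χ'(G)`: the least `k` admitting a proper edge `k`-coloring. -/
noncomputable def chromIndex {V : Type*} (G : SimpleGraph V) : ℕ :=
  sInf {k | ∃ c, IsEdgeColoring G k c}

/-- An edge `e` of `G` is critical if `χ'(G-e) < χ'(G)`. -/
def IsCriticalEdge {V : Type*} (G : SimpleGraph V) (e : Sym2 V) : Prop :=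
  e ∈ G.edgeSet ∧ chromIndex (G.deleteEdges {e}) < chromIndex G

/-- The set of colors of `[1,k]` missing at `v` under the coloring `c` of `G`. -/
def missingColors {V : Type*} (G : SimpleGraph V) (k : ℕ) (c : Sym2 V → ℕ) (v : V) : Set ℕ :=
  {α | 1 ≤ α ∧ α ≤ k ∧ ∀ e ∈ G.edgeSet, v ∈ e → c e ≠ α}

/-- `G` is `Δ`-critical: `Δ` is the maximum degree of `G`, `χ'(G) = Δ+1`, and every
proper subgraph has chromatic index less than `Δ+1`. -/
def IsDeltaCritical {V : Type*} [Fintype V] (G : SimpleGraph V) [DecidableRel G.Adj]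
    (Δ : ℕ) : Prop :=
  G.maxDegree = Δ ∧ chromIndex G = Δ + 1 ∧
    ∀ H : SimpleGraph V, H ≤ G → H ≠ G → chromIndex H < Δ + 1

/-- A Kierstead path `(v₀, v₀v₁, v₁, …, v_{p-1}v_p, v_p)` with respect to the edge
`v₀v₁` and a `k`-coloring `c` of `G - v₀v₁`, encoded by the list `P = [v₀, …, v_p]`. -/
structure IsKiersteadPath {V : Type*} (G : SimpleGraph V) (k : ℕ) (c : Sym2 V → ℕ)
    (P : List V) : Prop where
  two_le : 2 ≤ P.length
  nodup : P.Nodup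
  adj : ∀ (i : ℕ) (h : i + 1 < P.length), G.Adj (P[i]'(by omega)) (P[i+1]'h)
  color : ∀ (i : ℕ) (h : i + 1 < P.length), 1 ≤ i →
      ∃ (j : ℕ) (_ : j ≤ i),
        c (Sym2.mk (P[i]'(by omega)) (P[i+1]'h)) ∈
          missingColors (G.deleteEdges {Sym2.mk (P[0]'(by omega)) (P[1]'(by omega))}) k c
            (P[j]'(by omega))

/-- A multifan centered at `r` with respect to the edge `r s₁` and a `k`-coloring `c` of
`G - r s₁`, encoded by `r` and the list `sl = [s₁, …, s_p]`. -/
structure IsMultifan {V : Type*} (G : SimpleGraph V) (k : ℕ) (c : Sym2 V → ℕ)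
    (r : V) (sl : List V) : Prop where
  one_le : 1 ≤ sl.length
  nodup : (r :: sl).Nodup
  adj : ∀ (i : ℕ) (h : i < sl.length), G.Adj r (sl[i]'h)
  color : ∀ (i : ℕ) (h : i < sl.length), 1 ≤ i →
      ∃ (j : ℕ) (_ : j < i),
        c (Sym2.mk r (sl[i]'h)) ∈
          missingColors (G.deleteEdges {Sym2.mk r (sl[0]'(by omega))}) k c
            (sl[j]'(by omega))

/-- The subgraph of `G` whose edges are the edges colored `α` or `β` by `c`;
its components are the `(α,β)`-chains. -/
def chainGraph {V : Type*} (G : SimpleGraph V) (c : Sym2 V → ℕ) (α β : ℕ) :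
    SimpleGraph V where
  Adj x y := G.Adj x y ∧ (c (Sym2.mk x y) = α ∨ c (Sym2.mk x y) = β)
  symm := ⟨by
    intro x y hxy
    refine ⟨hxy.1.symm, ?_⟩
    rw [Sym2.eq_swap]
    exact hxy.2⟩
  loopless := ⟨fun x hx => G.loopless.irrefl x hx.1⟩

/-- `x` and `y` are `(α,β)`-linked with respect to the coloring `c` of `G`:
they belong to the same `(α,β)`-chain. -/
def Linked {V : Type*} (G : SimpleGraph V) (c : Sym2 V → ℕ) (α β : ℕ) (x y : V) : Prop :=
  (chainGraph G c α β).Reachable x y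

/-!
Delete the critical edge `ab`. Then `G - ab` has a `Δ`-edge-coloring, no color can be missing
at both `a` and `b` (it would extend to `ab`), and `d(a) + d(b) = Δ + 2` makes the missing
colors at `a` and `b` number exactly `Δ`: in every coloring they partition `[1,Δ]`. Hence for
`γ` missing at `a` and `δ` missing at `b`, the vertices `a` and `b` are the two ends of one
`(γ,δ)`-chain, so the chain through any other vertex missing `γ` or `δ` avoids both, and a
Kempe change along it leaves the colors at `a` and `b` untouched.

The degree hypothesis puts `x` next to `b` or next to a neighbor `y` of `b` (or the same
with `a`). Suppose `x` misses two colors, or one color while `b` misses two. A few Kempe changes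
then reach a coloring in which `c(xy)` is missing at `b` and `c(by)` (missing at `a`) is missing
at `x`; but then `b - y - x` is a whole `(c(by), c(xy))`-chain ending at `x`, which is impossible.
-/

section

open SimpleGraph

variable {V : Type*}

section MissingColors

variable {G : SimpleGraph V} {k : ℕ} {c : Sym2 V → ℕ}

theorem color_ne_of_mem_missingColors {e : Sym2 V} {v : V} {α : ℕ} (he : e ∈ G.edgeSet)
    (hv : v ∈ e) (hα : α ∈ missingColors G k c v) : c e ≠ α :=
  hα.2.2 e he hv

theorem mem_Icc_of_mem_missingColors {v : V} {α : ℕ}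
    (hα : α ∈ missingColors G k c v) : α ∈ Set.Icc 1 k :=
  ⟨hα.1, hα.2.1⟩

theorem missingColors_finite (v : V) : (missingColors G k c v).Finite :=
  (Set.finite_Icc 1 k).subset fun _ => mem_Icc_of_mem_missingColors

end MissingColors

namespace IsEdgeColoring

variable {G : SimpleGraph V} {k : ℕ} {c : Sym2 V → ℕ}

theorem eq_of_color_eq (hc : IsEdgeColoring G k c) {e f : Sym2 V} {v : V}
    (he : e ∈ G.edgeSet) (hf : f ∈ G.edgeSet) (hve : v ∈ e) (hvf : v ∈ f) (h : c e = c f) :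
    e = f :=
  by_contra fun hef => hc.2 e he f hf hef ⟨v, hve, hvf⟩ h

theorem color_ne_of_ne (hc : IsEdgeColoring G k c) {u v w : V} (hu : G.Adj u w)
    (hv : G.Adj v w) (huv : u ≠ v) : c s(u, w) ≠ c s(v, w) := fun h =>
  huv (Sym2.congr_left.mp (hc.eq_of_color_eq hu hv (Sym2.mem_mk_right _ _)
    (Sym2.mem_mk_right _ _) h))

theorem ncard_missingColors [Finite V] [DecidableEq V] (hc : IsEdgeColoring G k c) (v : V) :
    (missingColors G k c v).ncard = k - (G.neighborSet v).ncard := by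
  have hmiss : missingColors G k c v = Set.Icc 1 k \ c '' G.incidenceSet v := by
    ext α
    simp only [missingColors, Set.mem_sdiff, Set.mem_Icc, Set.mem_image, incidenceSet,
      Set.mem_ofPred_eq, not_exists, not_and, and_assoc]
  have hsub : c '' G.incidenceSet v ⊆ Set.Icc 1 k := by
    rintro _ ⟨e, he, rfl⟩
    exact hc.1 e he.1
  have hinj : Set.InjOn c (G.incidenceSet v) := fun e he f hf h =>
    hc.eq_of_color_eq he.1 hf.1 he.2 hf.2 h
  rw [hmiss, Set.ncard_sdiff hsub, hinj.ncard_image, Set.ncard_Icc_nat,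
    ← Nat.card_coe_set_eq, Nat.card_congr (G.incidenceSetEquivNeighborSet v),
    Nat.card_coe_set_eq, add_tsub_cancel_right]

theorem update_of_deleteEdges [DecidableEq V] {u v : V} {α : ℕ}
    (hc : IsEdgeColoring (G.deleteEdges {s(u, v)}) k c)
    (hu : α ∈ missingColors (G.deleteEdges {s(u, v)}) k c u)
    (hv : α ∈ missingColors (G.deleteEdges {s(u, v)}) k c v) :
    IsEdgeColoring G k (Function.update c s(u, v) α) := by
  have hH : ∀ e ∈ G.edgeSet, e ≠ s(u, v) → e ∈ (G.deleteEdges {s(u, v)}).edgeSet :=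
    fun e he hne => by simpa [edgeSet_deleteEdges] using ⟨he, hne⟩
  have hmiss : ∀ f ∈ G.edgeSet, f ≠ s(u, v) → ∀ w ∈ s(u, v), w ∈ f → c f ≠ α := by
    intro f hf hne w hw hwf
    rcases Sym2.mem_iff.mp hw with rfl | rfl
    · exact hu.2.2 f (hH f hf hne) hwf
    · exact hv.2.2 f (hH f hf hne) hwf
  refine ⟨fun e he => ?_, fun e he f hf hef ⟨w, hwe, hwf⟩ => ?_⟩
  · by_cases h : e = s(u, v)
    · subst h; simpa using ⟨hu.1, hu.2.1⟩
    · simpa [h] using hc.1 e (hH e he h)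
  · by_cases h₁ : e = s(u, v) <;> by_cases h₂ : f = s(u, v)
    · exact absurd (h₁.trans h₂.symm) hef
    · subst h₁; simpa [h₂] using (hmiss f hf h₂ w hwe hwf).symm
    · subst h₂; simpa [h₁] using hmiss e he h₁ w hwf hwe
    · simpa [h₁, h₂] using hc.2 e (hH e he h₁) f (hH f hf h₂) hef ⟨w, hwe, hwf⟩

end IsEdgeColoring

theorem exists_isEdgeColoring [Fintype V] [DecidableEq V] (G : SimpleGraph V) :
    ∃ k c, IsEdgeColoring G k c := by
  let σ := Fintype.equivFin (Sym2 V)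
  refine ⟨Fintype.card (Sym2 V), fun e => σ e + 1,
    fun e _ => ⟨Nat.le_add_left 1 _, (σ e).isLt⟩, fun e _ f _ hef _ h => hef ?_⟩
  exact σ.injective (Fin.ext (Nat.add_right_cancel h))

theorem exists_isEdgeColoring_of_chromIndex_le [Fintype V] [DecidableEq V] {G : SimpleGraph V}
    {k : ℕ} (h : chromIndex G ≤ k) : ∃ c, IsEdgeColoring G k c := by
  obtain ⟨c, hc⟩ : ∃ c, IsEdgeColoring G (chromIndex G) c :=
    Nat.sInf_mem (s := {k | ∃ c, IsEdgeColoring G k c}) (exists_isEdgeColoring G)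
  exact ⟨c, fun e he => ⟨(hc.1 e he).1, (hc.1 e he).2.trans h⟩, hc.2⟩

theorem not_isEdgeColoring_of_lt_chromIndex {G : SimpleGraph V} {k : ℕ} (h : k < chromIndex G)
    (c : Sym2 V → ℕ) : ¬ IsEdgeColoring G k c :=
  fun hc => (Nat.sInf_le (s := {k | ∃ c, IsEdgeColoring G k c}) ⟨c, hc⟩).not_gt h

theorem Equiv.swap_apply_mem_iff {X : Type*} [DecidableEq X] {s : Set X} {α β γ : X} (hα : α ∈ s)
    (hβ : β ∈ s) : Equiv.swap α β γ ∈ s ↔ γ ∈ s := by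
  rw [Equiv.swap_apply_def]
  split_ifs <;> simp_all

theorem SimpleGraph.Reachable.mem_of_forall_adj_mem {K : SimpleGraph V} {s : Set V}
    (hs : ∀ z ∈ s, ∀ z', K.Adj z z' → z' ∈ s) {u v : V} (h : K.Reachable u v) (hu : u ∈ s) :
    v ∈ s := by
  obtain ⟨p⟩ := h
  induction p with
  | nil => exact hu
  | cons h _ ih => exact ih (hs _ hu _ h)

/-- A path between `v` and `w` contains all neighbors of each of its vertices, hence their whole
component; `u` would be an interior vertex of it, with two neighbors. -/
theorem SimpleGraph.eq_or_eq_or_eq_of_reachable [Finite V] {K : SimpleGraph V}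
    (hK : ∀ z, (K.neighborSet z).ncard ≤ 2) {u v w : V}
    (hu : (K.neighborSet u).ncard ≤ 1) (hv : (K.neighborSet v).ncard ≤ 1)
    (hw : (K.neighborSet w).ncard ≤ 1) (hvu : K.Reachable v u) (hvw : K.Reachable v w) :
    u = v ∨ u = w ∨ v = w := by
  by_contra! h
  obtain ⟨huv, huw, hvw'⟩ := h
  obtain ⟨p, hp⟩ := hvw.exists_isPath
  have hnil : ¬ p.Nil := Walk.not_nil_of_ne hvw'
  have hnbr : ∀ i ≤ p.length,
      K.neighborSet (p.getVert i) = p.toSubgraph.neighborSet (p.getVert i) := by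
    intro i hi
    refine (Set.eq_of_subset_of_ncard_le (p.toSubgraph.neighborSet_subset _) ?_
      (Set.toFinite _)).symm
    rcases Nat.eq_zero_or_pos i with rfl | hi0
    · rw [p.getVert_zero, hp.neighborSet_toSubgraph_startpoint hnil, Set.ncard_singleton]
      exact hv
    rcases hi.eq_or_lt with rfl | hil
    · rw [p.getVert_length, hp.neighborSet_toSubgraph_endpoint hnil, Set.ncard_singleton]
      exact hw
    · rw [hp.ncard_neighborSet_toSubgraph_internal_eq_two hi0.ne' hil]
      exact hK _
  have hclosed : ∀ z ∈ p.support, ∀ z', K.Adj z z' → z' ∈ p.support := by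
    intro z hz z' hzz'
    obtain ⟨i, rfl, hi⟩ := Walk.mem_support_iff_exists_getVert.mp hz
    have hz' : z' ∈ K.neighborSet (p.getVert i) := hzz'
    simpa using p.toSubgraph.neighborSet_subset_verts _ (hnbr i hi ▸ hz')
  obtain ⟨i, rfl, hi⟩ := Walk.mem_support_iff_exists_getVert.mp
    (hvu.mem_of_forall_adj_mem hclosed p.start_mem_support)
  have hi0 : i ≠ 0 := by rintro rfl; exact huv p.getVert_zero
  have hil : i < p.length := lt_of_le_of_ne hi (by rintro rfl; exact huw p.getVert_length)
  have h2 := hp.ncard_neighborSet_toSubgraph_internal_eq_two hi0 hil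
  rw [← hnbr i hi] at h2
  omega

section Kempe

variable {G : SimpleGraph V} {k : ℕ} {c : Sym2 V → ℕ} {α β : ℕ}

theorem ncard_neighborSet_chainGraph_le (hc : IsEdgeColoring G k c) {v : V} {s : Set ℕ}
    (hs : ∀ w, (chainGraph G c α β).Adj v w → c s(v, w) ∈ s) (hfin : s.Finite) :
    ((chainGraph G c α β).neighborSet v).ncard ≤ s.ncard :=
  Set.ncard_le_ncard_of_injOn _ hs (fun _ hw _ hw' h =>
    Sym2.congr_right.mp (hc.eq_of_color_eq hw.1 hw'.1 (Sym2.mem_mk_left _ _)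
      (Sym2.mem_mk_left _ _) h)) hfin

theorem ncard_neighborSet_chainGraph_le_two (hc : IsEdgeColoring G k c) (v : V) :
    ((chainGraph G c α β).neighborSet v).ncard ≤ 2 :=
  (ncard_neighborSet_chainGraph_le hc (s := {α, β}) (fun _ hw => hw.2) (Set.toFinite _)).trans
    ((Set.ncard_insert_le _ _).trans (by rw [Set.ncard_singleton]))

theorem ncard_neighborSet_chainGraph_le_one (hc : IsEdgeColoring G k c) {v : V}
    (hv : α ∈ missingColors G k c v ∨ β ∈ missingColors G k c v) :
    ((chainGraph G c α β).neighborSet v).ncard ≤ 1 := by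
  rcases hv with hv | hv
  · refine (ncard_neighborSet_chainGraph_le hc (s := {β}) (fun w hw => ?_)
      (Set.toFinite _)).trans (Set.ncard_singleton β).le
    exact hw.2.resolve_left fun h => hv.2.2 _ hw.1 (Sym2.mem_mk_left _ _) h
  · refine (ncard_neighborSet_chainGraph_le hc (s := {α}) (fun w hw => ?_)
      (Set.toFinite _)).trans (Set.ncard_singleton α).le
    exact hw.2.resolve_right fun h => hv.2.2 _ hw.1 (Sym2.mem_mk_left _ _) h

theorem Linked.of_adj {v u w : V} (h : Linked G c α β v u) (huw : G.Adj u w)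
    (hcol : c s(u, w) = α ∨ c s(u, w) = β) : Linked G c α β v w :=
  SimpleGraph.Reachable.trans h (SimpleGraph.Adj.reachable ⟨huw, hcol⟩)

-- Edges that meet the chain with a color other than `α`, `β` are fixed by the swap.
open Classical in
noncomputable def kempeChange (G : SimpleGraph V) (c : Sym2 V → ℕ) (α β : ℕ) (v : V) :
    Sym2 V → ℕ :=
  fun e => if ∃ w ∈ e, Linked G c α β v w then Equiv.swap α β (c e) else c e

theorem kempeChange_apply_of_linked {v u : V} {e : Sym2 V} (hu : u ∈ e)
    (h : Linked G c α β v u) : kempeChange G c α β v e = Equiv.swap α β (c e) :=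
  if_pos ⟨u, hu, h⟩

theorem kempeChange_apply_of_not_linked {v u : V} {e : Sym2 V} (he : e ∈ G.edgeSet)
    (hu : u ∈ e) (h : ¬ Linked G c α β v u) : kempeChange G c α β v e = c e := by
  obtain ⟨w, rfl⟩ := Sym2.mem_iff_exists.mp hu
  by_cases hcol : c s(u, w) = α ∨ c s(u, w) = β
  · refine if_neg ?_
    rintro ⟨z, hz, hvz⟩
    rcases Sym2.mem_iff.mp hz with rfl | rfl
    · exact h hvz
    · exact h (hvz.of_adj (G.adj_symm he) (by rwa [Sym2.eq_swap]))
  · rw [kempeChange, Equiv.swap_apply_of_ne_of_ne (fun h => hcol (.inl h))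
      (fun h => hcol (.inr h)), ite_self]

theorem IsEdgeColoring.kempeChange (hc : IsEdgeColoring G k c) (hα : α ∈ Set.Icc 1 k)
    (hβ : β ∈ Set.Icc 1 k) (v : V) : IsEdgeColoring G k (kempeChange G c α β v) := by
  refine ⟨fun e he => ?_, fun e he f hf hef ⟨w, hwe, hwf⟩ => ?_⟩
  · by_cases h : Linked G c α β v e.out.1
    · rw [kempeChange_apply_of_linked e.out_fst_mem h]
      exact (Equiv.swap_apply_mem_iff hα hβ).2 (hc.1 e he)
    · rw [kempeChange_apply_of_not_linked he e.out_fst_mem h]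
      exact hc.1 e he
  · by_cases h : Linked G c α β v w
    · rw [kempeChange_apply_of_linked hwe h, kempeChange_apply_of_linked hwf h]
      exact (Equiv.swap α β).injective.ne (hc.2 e he f hf hef ⟨w, hwe, hwf⟩)
    · rw [kempeChange_apply_of_not_linked he hwe h, kempeChange_apply_of_not_linked hf hwf h]
      exact hc.2 e he f hf hef ⟨w, hwe, hwf⟩

theorem missingColors_kempeChange_of_linked (hα : α ∈ Set.Icc 1 k) (hβ : β ∈ Set.Icc 1 k)
    {v u : V} (h : Linked G c α β v u) :
    missingColors G k (kempeChange G c α β v) u = Equiv.swap α β ⁻¹' missingColors G k c u := by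
  ext γ
  simp only [missingColors, Set.mem_preimage, Set.mem_ofPred_eq, ← and_assoc]
  refine and_congr (Equiv.swap_apply_mem_iff hα hβ).symm
    (forall₂_congr fun e _ => imp_congr_right fun hu => ?_)
  rw [kempeChange_apply_of_linked hu h, ne_eq, Equiv.swap_apply_eq_iff]

theorem missingColors_kempeChange_of_not_linked {v u : V} (h : ¬ Linked G c α β v u) :
    missingColors G k (kempeChange G c α β v) u = missingColors G k c u := by
  ext γ
  simp only [missingColors, Set.mem_ofPred_eq]
  refine and_congr_right' (and_congr_right' (forall₂_congr fun e he => imp_congr_right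
    fun hu => ?_))
  rw [kempeChange_apply_of_not_linked he hu h]

end Kempe

def MissingColorsPartition (H : SimpleGraph V) (k : ℕ) (a b : V) : Prop :=
  ∀ c, IsEdgeColoring H k c → ∀ α ∈ Set.Icc 1 k,
    (α ∈ missingColors H k c a ↔ α ∉ missingColors H k c b)

namespace MissingColorsPartition

variable {H : SimpleGraph V} {k : ℕ} {a b : V} {c : Sym2 V → ℕ} {α γ δ : ℕ}

theorem symm (hP : MissingColorsPartition H k a b) : MissingColorsPartition H k b a :=
  fun c hc α hα => iff_not_comm.mp (hP c hc α hα)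

theorem mem_or_mem (hP : MissingColorsPartition H k a b) (hc : IsEdgeColoring H k c)
    (hα : α ∈ Set.Icc 1 k) : α ∈ missingColors H k c a ∨ α ∈ missingColors H k c b :=
  or_iff_not_imp_right.mpr (hP c hc α hα).2

theorem ne_of_mem (hP : MissingColorsPartition H k a b) (hc : IsEdgeColoring H k c)
    (hγ : γ ∈ missingColors H k c a) (hδ : δ ∈ missingColors H k c b) : γ ≠ δ := by
  rintro rfl
  exact (hP c hc γ (mem_Icc_of_mem_missingColors hγ)).1 hγ hδ

theorem color_mem_left (hP : MissingColorsPartition H k a b) (hc : IsEdgeColoring H k c)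
    {e : Sym2 V} (he : e ∈ H.edgeSet) (hb : b ∈ e) : c e ∈ missingColors H k c a :=
  (hP c hc _ (hc.1 e he)).2 fun h => color_ne_of_mem_missingColors he hb h rfl

theorem linked (hP : MissingColorsPartition H k a b) (hc : IsEdgeColoring H k c)
    (hγ : γ ∈ missingColors H k c a) (hδ : δ ∈ missingColors H k c b) :
    Linked H c γ δ a b := by
  by_contra h
  have hγk := mem_Icc_of_mem_missingColors hγ
  have hδk := mem_Icc_of_mem_missingColors hδ
  have ha : δ ∈ missingColors H k (kempeChange H c γ δ a) a := by
    rw [missingColors_kempeChange_of_linked hγk hδk (SimpleGraph.Reachable.refl a),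
      Set.mem_preimage, Equiv.swap_apply_right]
    exact hγ
  have hb : δ ∈ missingColors H k (kempeChange H c γ δ a) b := by
    rwa [missingColors_kempeChange_of_not_linked h]
  exact (hP _ (hc.kempeChange hγk hδk a) δ hδk).1 ha hb

variable [Finite V]

/-- A vertex missing `γ` or `δ` is an end of its `(γ,δ)`-chain, and that chain is a path;
the chain through `a` already has the two ends `a` and `b`. -/
theorem not_linked (hP : MissingColorsPartition H k a b) (hc : IsEdgeColoring H k c)
    (hγ : γ ∈ missingColors H k c a) (hδ : δ ∈ missingColors H k c b) {x : V} (hxa : x ≠ a)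
    (hxb : x ≠ b) (hx : γ ∈ missingColors H k c x ∨ δ ∈ missingColors H k c x) :
    ¬ Linked H c γ δ x a ∧ ¬ Linked H c γ δ x b := by
  have hab := hP.linked hc hγ hδ
  have hax : ¬ Linked H c γ δ a x := fun hax => by
    have := SimpleGraph.eq_or_eq_or_eq_of_reachable (ncard_neighborSet_chainGraph_le_two hc)
      (ncard_neighborSet_chainGraph_le_one hc hx) (ncard_neighborSet_chainGraph_le_one hc (.inl hγ))
      (ncard_neighborSet_chainGraph_le_one hc (.inr hδ)) hax hab
    rcases this with h | h | h
    · exact hxa h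
    · exact hxb h
    · exact (hP c hc γ (mem_Icc_of_mem_missingColors hγ)).1 hγ (h ▸ hγ)
  exact ⟨fun h => hax (SimpleGraph.Reachable.symm h),
    fun h => hax (SimpleGraph.Reachable.trans hab (SimpleGraph.Reachable.symm h))⟩

theorem exists_kempeChange (hP : MissingColorsPartition H k a b) (hc : IsEdgeColoring H k c)
    (hγ : γ ∈ missingColors H k c a) (hδ : δ ∈ missingColors H k c b) {x : V} (hxa : x ≠ a)
    (hxb : x ≠ b) (hx : γ ∈ missingColors H k c x ∨ δ ∈ missingColors H k c x) :
    ∃ c', IsEdgeColoring H k c' ∧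
      missingColors H k c' a = missingColors H k c a ∧
      missingColors H k c' b = missingColors H k c b ∧
      (∀ e ∈ H.edgeSet, b ∈ e → c' e = c e) ∧
      (∀ e, x ∈ e → c' e = Equiv.swap γ δ (c e)) ∧
      missingColors H k c' x = Equiv.swap γ δ ⁻¹' missingColors H k c x := by
  have hγk := mem_Icc_of_mem_missingColors hγ
  have hδk := mem_Icc_of_mem_missingColors hδ
  obtain ⟨hxa', hxb'⟩ := hP.not_linked hc hγ hδ hxa hxb hx
  exact ⟨kempeChange H c γ δ x, hc.kempeChange hγk hδk x,
    missingColors_kempeChange_of_not_linked hxa', missingColors_kempeChange_of_not_linked hxb',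
    fun e he hb => kempeChange_apply_of_not_linked he hb hxb',
    fun e hx => kempeChange_apply_of_linked hx (SimpleGraph.Reachable.refl x),
    missingColors_kempeChange_of_linked hγk hδk (SimpleGraph.Reachable.refl x)⟩

section Path

/- In the names below, `xy_mem_b` says that the color of `xy` is missing at `b`, `by_mem_x` that
the color of `by` is missing at `x`, and `mem_x_inter_b` that a color is missing at `x` and `b`. -/

variable (hP : MissingColorsPartition H k a b) {x y : V} (hxa : x ≠ a) (hxb : x ≠ b)
  (hby : H.Adj b y) (hxy : H.Adj x y)
include hP hxa hxb hby hxy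

theorem false_of_xy_mem_b_of_by_mem_x (hc : IsEdgeColoring H k c)
    (hθ : c s(x, y) ∈ missingColors H k c b) (hβ : c s(b, y) ∈ missingColors H k c x) :
    False := by
  have hlink : Linked H c (c s(b, y)) (c s(x, y)) b x :=
    (Linked.of_adj (SimpleGraph.Reachable.refl b) hby (.inl rfl)).of_adj hxy.symm
      (.inr (congrArg c Sym2.eq_swap))
  exact (hP.not_linked hc (hP.color_mem_left hc hby (Sym2.mem_mk_left b y)) hθ hxa hxb
    (.inl hβ)).2 (SimpleGraph.Reachable.symm hlink)

theorem false_of_xy_mem_b_of_mem_x_inter_b (hc : IsEdgeColoring H k c)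
    (hθ : c s(x, y) ∈ missingColors H k c b) {μ : ℕ} (hμx : μ ∈ missingColors H k c x)
    (hμb : μ ∈ missingColors H k c b) : False := by
  obtain ⟨c', hc', -, hB, hb, hx, hX⟩ := hP.exists_kempeChange hc
    (hP.color_mem_left hc hby (Sym2.mem_mk_left b y)) hμb hxa hxb (.inr hμx)
  refine hP.false_of_xy_mem_b_of_by_mem_x hxa hxb hby hxy hc' ?_ ?_
  · rw [hx _ (Sym2.mem_mk_left x y), Equiv.swap_apply_of_ne_of_ne
      (hc.color_ne_of_ne hxy hby hxb)
      (color_ne_of_mem_missingColors hxy (Sym2.mem_mk_left x y) hμx), hB]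
    exact hθ
  · rw [hb _ hby (Sym2.mem_mk_left b y), hX, Set.mem_preimage, Equiv.swap_apply_left]
    exact hμx

theorem false_of_xy_mem_b_of_mem_x_of_ne (hc : IsEdgeColoring H k c)
    (hθ : c s(x, y) ∈ missingColors H k c b) {μ δ : ℕ} (hμx : μ ∈ missingColors H k c x)
    (hδb : δ ∈ missingColors H k c b) (hδθ : δ ≠ c s(x, y)) : False := by
  rcases hP.mem_or_mem hc (mem_Icc_of_mem_missingColors hμx) with hμa | hμb
  · obtain ⟨c', hc', -, hB, -, hx, hX⟩ := hP.exists_kempeChange hc hμa hδb hxa hxb (.inl hμx)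
    refine hP.false_of_xy_mem_b_of_mem_x_inter_b hxa hxb hby hxy hc' (μ := δ) ?_ ?_ (hB ▸ hδb)
    · rw [hx _ (Sym2.mem_mk_left x y), Equiv.swap_apply_of_ne_of_ne
        (color_ne_of_mem_missingColors hxy (Sym2.mem_mk_left x y) hμx) hδθ.symm, hB]
      exact hθ
    · rw [hX, Set.mem_preimage, Equiv.swap_apply_right]
      exact hμx
  · exact hP.false_of_xy_mem_b_of_mem_x_inter_b hxa hxb hby hxy hc hθ hμx hμb

theorem false_of_xy_mem_a_of_mem_x_inter_b_of_ne (hc : IsEdgeColoring H k c)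
    (hθ : c s(x, y) ∈ missingColors H k c a) {μ δ : ℕ} (hμx : μ ∈ missingColors H k c x)
    (hμb : μ ∈ missingColors H k c b) (hδb : δ ∈ missingColors H k c b) (hδμ : δ ≠ μ) :
    False := by
  obtain ⟨c', hc', -, hB, -, hx, hX⟩ := hP.exists_kempeChange hc hθ hμb hxa hxb (.inr hμx)
  have hxy' : c' s(x, y) = μ := by rw [hx _ (Sym2.mem_mk_left x y), Equiv.swap_apply_left]
  refine hP.false_of_xy_mem_b_of_mem_x_of_ne hxa hxb hby hxy hc' (μ := c s(x, y)) (δ := δ)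
    (by rw [hxy', hB]; exact hμb) ?_ (hB ▸ hδb) (hxy' ▸ hδμ)
  rw [hX, Set.mem_preimage, Equiv.swap_apply_left]
  exact hμx

theorem missingColors_eq_empty (hc : IsEdgeColoring H k c)
    (hB : 2 ≤ (missingColors H k c b).ncard) : missingColors H k c x = ∅ := by
  refine Set.eq_empty_of_forall_notMem fun μ hμx => ?_
  have hθx := color_ne_of_mem_missingColors hxy (Sym2.mem_mk_left x y) hμx
  rcases hP.mem_or_mem hc (hc.1 s(x, y) hxy) with hθa | hθb
  · rcases hP.mem_or_mem hc (mem_Icc_of_mem_missingColors hμx) with hμa | hμb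
    · obtain ⟨δ, hδb⟩ :=
        Set.nonempty_of_ncard_ne_zero (by omega : (missingColors H k c b).ncard ≠ 0)
      obtain ⟨c', hc', hA, hB', -, hx, hX⟩ := hP.exists_kempeChange hc hμa hδb hxa hxb (.inl hμx)
      obtain ⟨δ', hδ'b, hδ'δ⟩ := (missingColors H k c b).exists_ne_of_one_lt_ncard (by omega) δ
      refine hP.false_of_xy_mem_a_of_mem_x_inter_b_of_ne hxa hxb hby hxy hc' (μ := δ) ?_ ?_
        (hB' ▸ hδb) (hB' ▸ hδ'b) hδ'δ
      · rw [hx _ (Sym2.mem_mk_left x y), Equiv.swap_apply_of_ne_of_ne hθx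
          (hP.ne_of_mem hc hθa hδb), hA]
        exact hθa
      · rw [hX, Set.mem_preimage, Equiv.swap_apply_right]
        exact hμx
    · obtain ⟨δ, hδb, hδμ⟩ := (missingColors H k c b).exists_ne_of_one_lt_ncard (by omega) μ
      exact hP.false_of_xy_mem_a_of_mem_x_inter_b_of_ne hxa hxb hby hxy hc hθa hμx hμb hδb hδμ
  · obtain ⟨δ, hδb, hδθ⟩ := (missingColors H k c b).exists_ne_of_one_lt_ncard (by omega) (c s(x, y))
    exact hP.false_of_xy_mem_b_of_mem_x_of_ne hxa hxb hby hxy hc hθb hμx hδb hδθ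

theorem false_of_xy_mem_a_of_mem_x_inter_b_of_by_mem_x (hc : IsEdgeColoring H k c)
    (hθ : c s(x, y) ∈ missingColors H k c a) {p : ℕ} (hpx : p ∈ missingColors H k c x)
    (hpb : p ∈ missingColors H k c b) (hβ : c s(b, y) ∈ missingColors H k c x) : False := by
  obtain ⟨c', hc', -, hB, hb, hx, hX⟩ := hP.exists_kempeChange hc hθ hpb hxa hxb (.inr hpx)
  refine hP.false_of_xy_mem_b_of_by_mem_x hxa hxb hby hxy hc' ?_ ?_
  · rw [hx _ (Sym2.mem_mk_left x y), Equiv.swap_apply_left, hB]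
    exact hpb
  · rw [hb _ hby (Sym2.mem_mk_left b y), hX, Set.mem_preimage, Equiv.swap_apply_of_ne_of_ne
      (hc.color_ne_of_ne hxy hby hxb).symm
      (hP.ne_of_mem hc (hP.color_mem_left hc hby (Sym2.mem_mk_left b y)) hpb)]
    exact hβ

/-- Two Kempe changes at `x` make `x` miss `c(by)` while keeping `p` missing. -/
theorem false_of_xy_mem_a_of_mem_x_inter_b_of_mem_x_inter_a (hc : IsEdgeColoring H k c)
    (hθ : c s(x, y) ∈ missingColors H k c a) {p q : ℕ} (hpx : p ∈ missingColors H k c x)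
    (hpb : p ∈ missingColors H k c b) (hqx : q ∈ missingColors H k c x)
    (hqa : q ∈ missingColors H k c a) : False := by
  set β := c s(b, y)
  by_cases hqβ : q = β
  · rw [hqβ] at hqx
    exact hP.false_of_xy_mem_a_of_mem_x_inter_b_of_by_mem_x hxa hxb hby hxy hc hθ hpx hpb hqx
  have hβa : β ∈ missingColors H k c a := hP.color_mem_left hc hby (Sym2.mem_mk_left b y)
  have hθβ : c s(x, y) ≠ β := hc.color_ne_of_ne hxy hby hxb
  have hθp := color_ne_of_mem_missingColors hxy (Sym2.mem_mk_left x y) hpx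
  have hθq := color_ne_of_mem_missingColors hxy (Sym2.mem_mk_left x y) hqx
  have hqp := hP.ne_of_mem hc hqa hpb
  have hβp := hP.ne_of_mem hc hβa hpb
  obtain ⟨c₁, hc₁, hA₁, hB₁, hb₁, hx₁, hX₁⟩ := hP.exists_kempeChange hc hβa hpb hxa hxb (.inr hpx)
  have hqx₁ : q ∈ missingColors H k c₁ x := by
    rwa [hX₁, Set.mem_preimage, Equiv.swap_apply_of_ne_of_ne hqβ hqp]
  obtain ⟨c₂, hc₂, hA₂, hB₂, hb₂, hx₂, hX₂⟩ := hP.exists_kempeChange hc₁ (hA₁ ▸ hqa)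
    (hB₁ ▸ hpb) hxa hxb (.inl hqx₁)
  refine hP.false_of_xy_mem_a_of_mem_x_inter_b_of_by_mem_x hxa hxb hby hxy hc₂ (p := p) ?_ ?_
    (by rw [hB₂, hB₁]; exact hpb) ?_
  · rw [hx₂ _ (Sym2.mem_mk_left x y), hx₁ _ (Sym2.mem_mk_left x y),
      Equiv.swap_apply_of_ne_of_ne hθβ hθp, Equiv.swap_apply_of_ne_of_ne hθq hθp, hA₂, hA₁]
    exact hθ
  · rw [hX₂, Set.mem_preimage, Equiv.swap_apply_right]
    exact hqx₁
  · rw [hb₂ _ hby (Sym2.mem_mk_left b y), hb₁ _ hby (Sym2.mem_mk_left b y), hX₂,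
      Set.mem_preimage, Equiv.swap_apply_of_ne_of_ne (Ne.symm hqβ) hβp, hX₁, Set.mem_preimage,
      Equiv.swap_apply_left]
    exact hpx

theorem false_of_xy_mem_a_of_mem_x_inter_b_of_mem_x (hc : IsEdgeColoring H k c)
    (hθ : c s(x, y) ∈ missingColors H k c a) {ν μ : ℕ} (hνx : ν ∈ missingColors H k c x)
    (hνb : ν ∈ missingColors H k c b) (hμx : μ ∈ missingColors H k c x) (hμν : μ ≠ ν) :
    False := by
  rcases hP.mem_or_mem hc (mem_Icc_of_mem_missingColors hμx) with hμa | hμb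
  · exact hP.false_of_xy_mem_a_of_mem_x_inter_b_of_mem_x_inter_a hxa hxb hby hxy hc hθ hνx hνb
      hμx hμa
  · exact hP.false_of_xy_mem_a_of_mem_x_inter_b_of_ne hxa hxb hby hxy hc hθ hνx hνb hμb hμν

/-- The Kempe change on the `(p, c(xy))`-chain through `a` and `b` moves `c(xy)` from `b`
to `a`, and does not reach `x`. -/
theorem false_of_xy_mem_b_of_two_mem_x (hc : IsEdgeColoring H k c)
    (hθ : c s(x, y) ∈ missingColors H k c b) {p q : ℕ} (hpx : p ∈ missingColors H k c x)
    (hqx : q ∈ missingColors H k c x) (hpq : p ≠ q) : False := by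
  rcases hP.mem_or_mem hc (mem_Icc_of_mem_missingColors hpx) with hpa | hpb
  · have hpk := mem_Icc_of_mem_missingColors hpa
    have hθk := mem_Icc_of_mem_missingColors hθ
    have hab : Linked H c p (c s(x, y)) a b := hP.linked hc hpa hθ
    have hax : ¬ Linked H c p (c s(x, y)) a x := fun h =>
      (hP.not_linked hc hpa hθ hxa hxb (.inl hpx)).1 (SimpleGraph.Reachable.symm h)
    have hxy' : kempeChange H c p (c s(x, y)) a s(x, y) = c s(x, y) :=
      kempeChange_apply_of_not_linked hxy (Sym2.mem_mk_left x y) hax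
    refine hP.false_of_xy_mem_a_of_mem_x_inter_b_of_mem_x hxa hxb hby hxy
      (hc.kempeChange hpk hθk a) (ν := p) (μ := q) ?_ ?_ ?_ ?_ hpq.symm
    · rw [hxy', missingColors_kempeChange_of_linked hpk hθk (SimpleGraph.Reachable.refl a),
        Set.mem_preimage, Equiv.swap_apply_right]
      exact hpa
    · rwa [missingColors_kempeChange_of_not_linked hax]
    · rw [missingColors_kempeChange_of_linked hpk hθk hab, Set.mem_preimage,
        Equiv.swap_apply_left]
      exact hθ
    · rwa [missingColors_kempeChange_of_not_linked hax]
  · exact hP.false_of_xy_mem_b_of_mem_x_inter_b hxa hxb hby hxy hc hθ hpx hpb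

theorem missingColors_subsingleton (hc : IsEdgeColoring H k c)
    (hB : (missingColors H k c b).Nonempty) : (missingColors H k c x).Subsingleton := by
  intro p hpx q hqx
  by_contra hpq
  rcases hP.mem_or_mem hc (hc.1 s(x, y) hxy) with hθa | hθb
  · rcases hP.mem_or_mem hc (mem_Icc_of_mem_missingColors hpx) with hpa | hpb
    · rcases hP.mem_or_mem hc (mem_Icc_of_mem_missingColors hqx) with hqa | hqb
      · obtain ⟨ε, hε⟩ := hB
        obtain ⟨c', hc', hA, hB', -, hx, hX⟩ := hP.exists_kempeChange hc hpa hε hxa hxb (.inl hpx)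
        have hqε := hP.ne_of_mem hc hqa hε
        refine hP.false_of_xy_mem_a_of_mem_x_inter_b_of_mem_x hxa hxb hby hxy hc' (ν := ε)
          (μ := q) ?_ ?_ (hB' ▸ hε) ?_ hqε
        · rw [hx _ (Sym2.mem_mk_left x y), Equiv.swap_apply_of_ne_of_ne
            (color_ne_of_mem_missingColors hxy (Sym2.mem_mk_left x y) hpx)
            (hP.ne_of_mem hc hθa hε), hA]
          exact hθa
        · rw [hX, Set.mem_preimage, Equiv.swap_apply_right]
          exact hpx
        · rwa [hX, Set.mem_preimage, Equiv.swap_apply_of_ne_of_ne (Ne.symm hpq) hqε]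
      · exact hP.false_of_xy_mem_a_of_mem_x_inter_b_of_mem_x hxa hxb hby hxy hc hθa hqx hqb hpx hpq
    · exact hP.false_of_xy_mem_a_of_mem_x_inter_b_of_mem_x hxa hxb hby hxy hc hθa hpx hpb hqx
        (Ne.symm hpq)
  · exact hP.false_of_xy_mem_b_of_two_mem_x hxa hxb hby hxy hc hθb hpx hqx hpq

end Path

theorem missingColors_eq_empty_of_adj (hP : MissingColorsPartition H k a b)
    (hc : IsEdgeColoring H k c) {x : V} (hbx : H.Adj b x) (hxa : x ≠ a)
    (hB : (missingColors H k c b).Nonempty) : missingColors H k c x = ∅ := by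
  have hxb : x ≠ b := hbx.ne'
  have key : ∀ c, IsEdgeColoring H k c →
      ∀ γ ∈ missingColors H k c x, γ ∉ missingColors H k c b := by
    intro c hc γ hγx hγb
    have hlink : Linked H c (c s(b, x)) γ b x :=
      Linked.of_adj (SimpleGraph.Reachable.refl b) hbx (.inl rfl)
    exact (hP.not_linked hc (hP.color_mem_left hc hbx (Sym2.mem_mk_left b x)) hγb hxa hxb
      (.inr hγx)).2 (SimpleGraph.Reachable.symm hlink)
  refine Set.eq_empty_of_forall_notMem fun μ hμx => ?_
  rcases hP.mem_or_mem hc (mem_Icc_of_mem_missingColors hμx) with hμa | hμb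
  · obtain ⟨ε, hε⟩ := hB
    obtain ⟨c', hc', -, hB', -, -, hX⟩ := hP.exists_kempeChange hc hμa hε hxa hxb (.inl hμx)
    refine key c' hc' ε ?_ (hB' ▸ hε)
    rw [hX, Set.mem_preimage, Equiv.swap_apply_right]
    exact hμx
  · exact key c hc μ hμx hμb

theorem missingColors_of_adj_or_exists_adj (hP : MissingColorsPartition H k a b)
    (hc : IsEdgeColoring H k c) (hA : (missingColors H k c a).Nonempty)
    (hB : (missingColors H k c b).Nonempty) {x : V} (hxa : x ≠ a) (hxb : x ≠ b)
    (hx : (H.Adj b x ∨ ∃ y, H.Adj b y ∧ H.Adj x y) ∨ (H.Adj a x ∨ ∃ y, H.Adj a y ∧ H.Adj x y)) :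
    (missingColors H k c x).Subsingleton ∧ (2 ≤ (missingColors H k c a).ncard →
      2 ≤ (missingColors H k c b).ncard → missingColors H k c x = ∅) := by
  rcases hx with (hbx | ⟨y, hby, hxy⟩) | (hax | ⟨y, hay, hxy⟩)
  · have h := hP.missingColors_eq_empty_of_adj hc hbx hxa hB
    exact ⟨h ▸ Set.subsingleton_empty, fun _ _ => h⟩
  · exact ⟨hP.missingColors_subsingleton hxa hxb hby hxy hc hB,
      fun _ => hP.missingColors_eq_empty hxa hxb hby hxy hc⟩
  · have h := hP.symm.missingColors_eq_empty_of_adj hc hax hxb hA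
    exact ⟨h ▸ Set.subsingleton_empty, fun _ _ => h⟩
  · exact ⟨hP.symm.missingColors_subsingleton hxb hxa hay hxy hc hA,
      fun h _ => hP.symm.missingColors_eq_empty hxb hxa hay hxy hc h⟩

end MissingColorsPartition

section DeleteEdge

variable {G : SimpleGraph V} {a b : V}

theorem SimpleGraph.ncard_neighborSet_eq_degree [Fintype V] [DecidableRel G.Adj] (v : V) :
    (G.neighborSet v).ncard = G.degree v := by
  rw [← G.card_neighborFinset_eq_degree, ← Set.ncard_coe_finset, coe_neighborFinset]

theorem SimpleGraph.neighborSet_deleteEdges_of_ne {v : V} (hva : v ≠ a) (hvb : v ≠ b) :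
    (G.deleteEdges {s(a, b)}).neighborSet v = G.neighborSet v := by
  ext w
  simp [hva, hvb]

theorem SimpleGraph.ncard_neighborSet_deleteEdges [Fintype V] [DecidableRel G.Adj]
    (hab : G.Adj a b) : ((G.deleteEdges {s(a, b)}).neighborSet a).ncard = G.degree a - 1 := by
  have : (G.deleteEdges {s(a, b)}).neighborSet a = G.neighborSet a \ {b} := by
    ext w
    simp [G.ne_of_adj hab]
  rw [this, Set.ncard_sdiff_singleton_of_mem (show b ∈ G.neighborSet a from hab),
    ncard_neighborSet_eq_degree]

theorem SimpleGraph.ncard_neighborSet_deleteEdges_right [Fintype V] [DecidableRel G.Adj]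
    (hab : G.Adj a b) : ((G.deleteEdges {s(a, b)}).neighborSet b).ncard = G.degree b - 1 := by
  rw [Sym2.eq_swap]
  exact ncard_neighborSet_deleteEdges hab.symm

end DeleteEdge

section CriticalEdge

variable [Fintype V] [DecidableEq V] {G : SimpleGraph V} [DecidableRel G.Adj] {a b : V}

theorem SimpleGraph.exists_adj_mem_of_card_sub_le {S : Finset V} {x : V} (hx : x ∉ S)
    (h : Fintype.card V - S.card ≤ G.degree x) : ∃ y ∈ S, G.Adj x y := by
  by_contra! hcon
  have hsub : G.neighborFinset x ⊆ Sᶜ.erase x := fun w hw => by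
    rw [mem_neighborFinset] at hw
    exact Finset.mem_erase.mpr ⟨hw.ne', Finset.mem_compl.mpr fun hwS => hcon w hwS hw⟩
  have hle := Finset.card_le_card hsub
  rw [Finset.card_erase_of_mem (Finset.mem_compl.mpr hx), Finset.card_compl,
    card_neighborFinset_eq_degree] at hle
  have hpos : 0 < Sᶜ.card := Finset.card_pos.mpr ⟨x, Finset.mem_compl.mpr hx⟩
  rw [Finset.card_compl] at hpos
  omega

theorem adj_or_exists_adj_deleteEdges {x : V} (hxa : x ≠ a) (hxb : x ≠ b)
    (hdeg : Fintype.card V - (G.neighborFinset a ∪ G.neighborFinset b).card ≤ G.degree x) :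
    ((G.deleteEdges {s(a, b)}).Adj b x ∨
        ∃ y, (G.deleteEdges {s(a, b)}).Adj b y ∧ (G.deleteEdges {s(a, b)}).Adj x y) ∨
      ((G.deleteEdges {s(a, b)}).Adj a x ∨
        ∃ y, (G.deleteEdges {s(a, b)}).Adj a y ∧ (G.deleteEdges {s(a, b)}).Adj x y) := by
  have hH : ∀ {u w : V}, G.Adj u w → w ≠ a → w ≠ b → (G.deleteEdges {s(a, b)}).Adj u w :=
    fun h hwa hwb => (deleteEdges_adj).mpr ⟨h, by simp [hwa, hwb]⟩
  by_cases hx : x ∈ G.neighborFinset a ∪ G.neighborFinset b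
  · rcases Finset.mem_union.mp hx with h | h
    · exact .inr (.inl (hH ((mem_neighborFinset _ _ _).mp h) hxa hxb))
    · exact .inl (.inl (hH ((mem_neighborFinset _ _ _).mp h) hxa hxb))
  · obtain ⟨y, hy, hxy⟩ := G.exists_adj_mem_of_card_sub_le hx hdeg
    have hya : y ≠ a := by
      rintro rfl
      exact hx (Finset.mem_union_left _ ((mem_neighborFinset _ _ _).mpr hxy.symm))
    have hyb : y ≠ b := by
      rintro rfl
      exact hx (Finset.mem_union_right _ ((mem_neighborFinset _ _ _).mpr hxy.symm))
    rcases Finset.mem_union.mp hy with h | h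
    · exact .inr (.inr ⟨y, hH ((mem_neighborFinset _ _ _).mp h) hya hyb, hH hxy hya hyb⟩)
    · exact .inl (.inr ⟨y, hH ((mem_neighborFinset _ _ _).mp h) hya hyb, hH hxy hya hyb⟩)

theorem missingColorsPartition_deleteEdges {Δ : ℕ} (hΔ : G.maxDegree = Δ)
    (hclass2 : chromIndex G = Δ + 1) (hab : G.Adj a b)
    (hfd : G.degree a + G.degree b = Δ + 2) :
    MissingColorsPartition (G.deleteEdges {s(a, b)}) Δ a b := by
  intro c hc α hα
  have hdisj : ∀ β, β ∈ missingColors (G.deleteEdges {s(a, b)}) Δ c a →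
      β ∉ missingColors (G.deleteEdges {s(a, b)}) Δ c b := fun β ha hb =>
    not_isEdgeColoring_of_lt_chromIndex (by omega) _ (hc.update_of_deleteEdges ha hb)
  have hda := hΔ ▸ G.degree_le_maxDegree a
  have hdb := hΔ ▸ G.degree_le_maxDegree b
  have hunion : missingColors (G.deleteEdges {s(a, b)}) Δ c a ∪
      missingColors (G.deleteEdges {s(a, b)}) Δ c b = Set.Icc 1 Δ := by
    refine Set.eq_of_subset_of_ncard_le (Set.union_subset (fun _ => mem_Icc_of_mem_missingColors)
      (fun _ => mem_Icc_of_mem_missingColors)) ?_ (Set.toFinite _)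
    rw [Set.ncard_union_eq (Set.disjoint_left.mpr fun β => hdisj β) (missingColors_finite a)
      (missingColors_finite b), hc.ncard_missingColors, hc.ncard_missingColors,
      ncard_neighborSet_deleteEdges hab, ncard_neighborSet_deleteEdges_right hab,
      Set.ncard_Icc_nat]
    omega
  rw [← hunion] at hα
  exact ⟨hdisj α, hα.resolve_right⟩

end CriticalEdge

end

/-- Let `G` be an `n`-vertex Class 2 graph with maximum degree `Δ` having
a full-deficiency pair `(a,b)` with `ab` a critical edge. Then every vertex
`x ∈ V(G) \ {a,b}` with `d_G(x) ≥ n - |N(a) ∪ N(b)|` has `d_G(x) ≥ Δ - 1`; furthermore,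
if `d_G(a) < Δ` and `d_G(b) < Δ`, then `d_G(x) = Δ`. -/
theorem fullDeficiencyPair_large_degree
    {V : Type*} [Fintype V] [DecidableEq V]
    (n Δ : ℕ) (G : SimpleGraph V) [DecidableRel G.Adj]
    (hcard : Fintype.card V = n)
    (hΔ : G.maxDegree = Δ) (hclass2 : chromIndex G = Δ + 1)
    (a b : V) (hab : G.Adj a b) (hfd : G.degree a + G.degree b = Δ + 2)
    (hcrit : IsCriticalEdge G (Sym2.mk a b))
    (x : V) (hxa : x ≠ a) (hxb : x ≠ b)
    (hdeg : n - (G.neighborFinset a ∪ G.neighborFinset b).card ≤ G.degree x) :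
    Δ - 1 ≤ G.degree x ∧ ((G.degree a < Δ ∧ G.degree b < Δ) → G.degree x = Δ) := by
  set H := G.deleteEdges {s(a, b)}
  have hP : MissingColorsPartition H Δ a b :=
    missingColorsPartition_deleteEdges hΔ hclass2 hab hfd
  obtain ⟨c, hc⟩ : ∃ c, IsEdgeColoring H Δ c :=
    exists_isEdgeColoring_of_chromIndex_le (Nat.lt_succ_iff.mp (hclass2 ▸ hcrit.2 :))
  have hda := hΔ ▸ G.degree_le_maxDegree a
  have hdb := hΔ ▸ G.degree_le_maxDegree b
  have hdx := hΔ ▸ G.degree_le_maxDegree x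
  have hMx := hc.ncard_missingColors x
  have hMa := hc.ncard_missingColors a
  have hMb := hc.ncard_missingColors b
  rw [SimpleGraph.neighborSet_deleteEdges_of_ne hxa hxb,
    SimpleGraph.ncard_neighborSet_eq_degree] at hMx
  rw [SimpleGraph.ncard_neighborSet_deleteEdges hab] at hMa
  rw [SimpleGraph.ncard_neighborSet_deleteEdges_right hab] at hMb
  have hA : (missingColors H Δ c a).Nonempty := Set.nonempty_of_ncard_ne_zero (by omega)
  have hB : (missingColors H Δ c b).Nonempty := Set.nonempty_of_ncard_ne_zero (by omega)
  obtain ⟨hsub, hempty⟩ := hP.missingColors_of_adj_or_exists_adj hc hA hB hxa hxb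
    (adj_or_exists_adj_deleteEdges hxa hxb (hcard ▸ hdeg))
  refine ⟨?_, fun ⟨ha, hb⟩ => ?_⟩
  · have := (Set.ncard_le_one (missingColors_finite x)).mpr hsub
    omega
  · rw [hempty (by omega) (by omega), Set.ncard_empty] at hMx
    omega
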